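/- Let δ > 0, C_F ≥ 0, and β₁, β₂ > 0 be real numbers, and let X₁, X₂, S₁, S₂, r, q, d, P ≥ 0 be nonnegative reals. If X₁² + δX₂² + (1/2)(δS₂ + S₁) ≤ (δ/2)(S₂/2 + 2d²) + (r + C_F q + δP)X₁ + δ q X₂, then X₁² + δX₂² + S₁ + (δ/2)S₂ ≤ 2δd² + (1+β₁)( (1+β₂)r² + (1 + 1/β₂)C_F² q² ) + (1 + 1/β₁)δ²P² + δq². -/
import Mathlib

lemma young_split (β a b : ℝ) (hβ : 0 < β) :
    (a + b) ^ 2 ≤ (1 + β) * a ^ 2 + (1 + 1 / β) * b ^ 2 := by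
  have key : (1 + β) * a ^ 2 + (1 + 1 / β) * b ^ 2 - (a + b) ^ 2
      = (β * a - b) ^ 2 / β := by
    field_simp
    ring
  nlinarith [div_nonneg (sq_nonneg (β * a - b)) hβ.le]

theorem stmt_6 (δ C_F β₁ β₂ X₁ X₂ S₁ S₂ r q d P : ℝ)
    (hδ : 0 < δ) (hCF : 0 ≤ C_F) (hβ₁ : 0 < β₁) (hβ₂ : 0 < β₂)
    (hX₁ : 0 ≤ X₁) (hX₂ : 0 ≤ X₂) (hS₁ : 0 ≤ S₁) (hS₂ : 0 ≤ S₂)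
    (hr : 0 ≤ r) (hq : 0 ≤ q) (hd : 0 ≤ d) (hP : 0 ≤ P)
    (h : X₁ ^ 2 + δ * X₂ ^ 2 + (1 / 2) * (δ * S₂ + S₁)
      ≤ (δ / 2) * (S₂ / 2 + 2 * d ^ 2) + (r + C_F * q + δ * P) * X₁ + δ * q * X₂) :
    X₁ ^ 2 + δ * X₂ ^ 2 + S₁ + (δ / 2) * S₂
      ≤ 2 * δ * d ^ 2
        + (1 + β₁) * ((1 + β₂) * r ^ 2 + (1 + 1 / β₂) * C_F ^ 2 * q ^ 2)
        + (1 + 1 / β₁) * δ ^ 2 * P ^ 2 + δ * q ^ 2 := by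
  have key : X₁ ^ 2 + δ * X₂ ^ 2 + S₁ + (δ / 2) * S₂
      ≤ 2 * δ * d ^ 2 + (r + C_F * q + δ * P) ^ 2 + δ * q ^ 2 := by
    nlinarith [sq_nonneg (X₁ - (r + C_F * q + δ * P)),
      mul_nonneg hδ.le (sq_nonneg (X₂ - q))]
  have y1 : (r + C_F * q + δ * P) ^ 2
      ≤ (1 + β₁) * (r + C_F * q) ^ 2 + (1 + 1 / β₁) * (δ * P) ^ 2 :=
    young_split β₁ (r + C_F * q) (δ * P) hβ₁
  have y2 : (r + C_F * q) ^ 2 ≤ (1 + β₂) * r ^ 2 + (1 + 1 / β₂) * (C_F * q) ^ 2 :=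
    young_split β₂ r (C_F * q) hβ₂
  have hb : (0:ℝ) ≤ 1 + β₁ := by linarith
  have := mul_le_mul_of_nonneg_left y2 hb
  nlinarith [this, y1]
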